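/- arXiv:1804.00048 — 10 statements merged into one kernel-verified Lean document; each statement's English description precedes it below -/
import Mathlib

section
/- Let π* ∈ ℝ^T be a minimizer of the Lagrangian dual function, i.e. z(π*) ≤ z(π) for all π ∈ ℝ^T. Then π* minimizes the total uplift: for every π ∈ ℝ^T, Σ_{c∈C} uplift_c(π*) ≤ Σ_{c∈C} uplift_c(π). -/
/-- A minimizer `π*` of the Lagrangian dual function minimizes the total uplift. -/
theorem convex_hull_prices_minimize_uplifts
    {C : Type*} [Fintype C] {T : ℕ} (n : C → ℕ)
    (X : ∀ c : C, Set (Fin (n c) → ℝ))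
    (B : ∀ c : C, (Fin (n c) → ℝ) → ℝ)
    (q : ∀ c : C, (Fin (n c) → ℝ) →ₗ[ℝ] (Fin T → ℝ))
    (hXne : ∀ c, (X c).Nonempty)
    (hXcomp : ∀ c, IsCompact (X c))
    (hBcont : ∀ c, Continuous (B c))
    -- a welfare-optimal solution y*
    (ystar : ∀ c : C, Fin (n c) → ℝ)
    (hystar_mem : ∀ c, ystar c ∈ X c)
    (hystar_bal : ∑ c, q c (ystar c) = 0)
    (hystar_opt : ∀ y : ∀ c : C, Fin (n c) → ℝ, (∀ c, y c ∈ X c) →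
      (∑ c, q c (y c)) = 0 → ∑ c, B c (y c) ≤ ∑ c, B c (ystar c))
    -- the Lagrangian dual function
    (z : (Fin T → ℝ) → ℝ)
    (hz : ∀ π : Fin T → ℝ,
      z π = ∑ c, sSup ((fun y => B c y - ∑ t, π t * (q c y) t) '' X c))
    -- uplifts (w.r.t. the reference welfare-optimal solution y*)
    (uplift : C → (Fin T → ℝ) → ℝ)
    (huplift : ∀ (c : C) (π : Fin T → ℝ),
      uplift c π = sSup ((fun y => B c y - ∑ t, π t * (q c y) t) '' X c)
        - (B c (ystar c) - ∑ t, π t * (q c (ystar c)) t))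
    -- π* minimizes the Lagrangian dual function
    (πstar : Fin T → ℝ)
    (hπstar : ∀ π : Fin T → ℝ, z πstar ≤ z π) :
    ∀ π : Fin T → ℝ, ∑ c, uplift c πstar ≤ ∑ c, uplift c π := by
  have key : ∀ π : Fin T → ℝ, ∑ c, uplift c π = z π - ∑ c, B c (ystar c) := by
    intro π
    have hq : ∑ c, ∑ t, π t * (q c (ystar c)) t = 0 := by
      rw [Finset.sum_comm]
      have : ∀ t, ∑ c, π t * (q c (ystar c)) t = 0 := by
        intro t
        rw [← Finset.mul_sum]
        have : ∑ c, (q c (ystar c)) t = 0 := by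
          have := congrFun hystar_bal t
          simpa [Finset.sum_apply] using this
        rw [this, mul_zero]
      simp [this]
    simp only [huplift, Finset.sum_sub_distrib, hz]
    rw [hq]
    ring
  intro π
  rw [key πstar, key π]
  linarith [hπstar π]
end

section
/- Let X_c be the feasible set of a market participant with bids I, periods {1,…,T}, quantities Q, minimum acceptance ratios r with 0 ≤ r_i ≤ 1, and ramp limits RU, RD ≥ 0, i.e. X_c = {(u,x) ∈ ℝ × ℝ^I : u ∈ {0,1}, 0 ≤ x_i ≤ u and x_i ≥ r_i u for all i, and for every t ∈ {1,…,T−1}, Σ_{i:t(i)=t+1}(−Q_i)x_i − Σ_{i:t(i)=t}(−Q_i)x_i ≤ RU·u and Σ_{i:t(i)=t}(−Q_i)x_i − Σ_{i:t(i)=t+1}(−Q_i)x_i ≤ RD·u}. Assume the slice {x : (1,x) ∈ X_c} is nonempty. Then conv(X_c) equals the continuous relaxation of X_c, i.e. the set defined by the same linear inequalities with u ∈ {0,1} replaced by 0 ≤ u ≤ 1. -/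
/-!
Without the condition on `u`, the constraints are homogeneous linear inequalities in `(u, x)`, so
they cut out a convex cone `K` containing `0`. The binary set is the part of `K` over `u ∈ {0, 1}`,
and a point `(u, x)` of `K` with `0 < u ≤ 1` is the convex combination
`(1 - u) • 0 + u • (u⁻¹ • (u, x))` of two of its points.
-/

open Finset

/-- Net increase of production from period `τ` to period `τ + 1`. -/
noncomputable def rampUpAmount {I : Type*} [Fintype I] (tmap : I → ℕ) (Q : I → ℝ)
    (x : I → ℝ) (τ : ℕ) : ℝ :=
  (∑ i ∈ Finset.univ.filter (fun i => tmap i = τ + 1), (-Q i) * x i) -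
    ∑ i ∈ Finset.univ.filter (fun i => tmap i = τ), (-Q i) * x i

/-- Net decrease of production from period `τ` to period `τ + 1`. -/
noncomputable def rampDownAmount {I : Type*} [Fintype I] (tmap : I → ℕ) (Q : I → ℝ)
    (x : I → ℝ) (τ : ℕ) : ℝ :=
  (∑ i ∈ Finset.univ.filter (fun i => tmap i = τ), (-Q i) * x i) -
    ∑ i ∈ Finset.univ.filter (fun i => tmap i = τ + 1), (-Q i) * x i

/-- The market participant's feasible set with bids `I`, periods `{1,…,T}`, quantities `Q`,
minimum acceptance ratios `r`, ramp limits `RU`, `RD`, where the commitment variable `u`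
is constrained by the predicate `ucond` (binary or relaxed). -/
def bidFeasSet {I : Type*} [Fintype I] (tmap : I → ℕ) (Q r : I → ℝ) (RU RD : ℝ)
    (T : ℕ) (ucond : ℝ → Prop) : Set (ℝ × (I → ℝ)) :=
  {p : ℝ × (I → ℝ) | ucond p.1 ∧
    (∀ i, 0 ≤ p.2 i ∧ p.2 i ≤ p.1 ∧ r i * p.1 ≤ p.2 i) ∧
    ∀ τ ∈ Finset.Icc 1 (T - 1),
      rampUpAmount tmap Q p.2 τ ≤ RU * p.1 ∧ rampDownAmount tmap Q p.2 τ ≤ RD * p.1}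

theorem ConvexCone.convexHull_sep_fst_eq_zero_or_one {E : Type*} [AddCommGroup E] [Module ℝ E]
    (K : ConvexCone ℝ (ℝ × E)) (hK : K.Pointed) :
    convexHull ℝ {p ∈ (K : Set (ℝ × E)) | p.1 = 0 ∨ p.1 = 1} =
      {p ∈ (K : Set (ℝ × E)) | 0 ≤ p.1 ∧ p.1 ≤ 1} := by
  set S := {p ∈ (K : Set (ℝ × E)) | p.1 = 0 ∨ p.1 = 1}
  refine (convexHull_min ?_ ?_).antisymm ?_
  · rintro p ⟨hp, h | h⟩ <;> exact ⟨hp, by simp [h]⟩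
  · exact K.convex.inter ((convex_Icc (0 : ℝ) 1).linear_preimage (LinearMap.fst ℝ ℝ E))
  · rintro p ⟨hp, hu0, hu1⟩
    obtain hu | hu := hu0.eq_or_lt
    · exact subset_convexHull ℝ S ⟨hp, Or.inl hu.symm⟩
    have hapex : (0 : ℝ × E) ∈ S := ⟨hK, Or.inl rfl⟩
    have hnormalized : p.1⁻¹ • p ∈ S := ⟨K.smul_mem (inv_pos.2 hu) hp, Or.inr (by simp [hu.ne'])⟩
    have hsegment : p = (1 - p.1) • (0 : ℝ × E) + p.1 • (p.1⁻¹ • p) := by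
      simp [smul_smul, hu.ne']
    rw [hsegment]
    exact convex_convexHull ℝ S (subset_convexHull ℝ S hapex) (subset_convexHull ℝ S hnormalized)
      (by linarith) hu.le (by ring)

section Ramp

variable {I : Type*} [Fintype I] (tmap : I → ℕ) (Q : I → ℝ) (τ : ℕ)

lemma rampUpAmount_add (x y : I → ℝ) :
    rampUpAmount tmap Q (x + y) τ = rampUpAmount tmap Q x τ + rampUpAmount tmap Q y τ := by
  simp only [rampUpAmount, Pi.add_apply, mul_add, sum_add_distrib]
  ring

lemma rampUpAmount_smul (c : ℝ) (x : I → ℝ) :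
    rampUpAmount tmap Q (c • x) τ = c * rampUpAmount tmap Q x τ := by
  simp only [rampUpAmount, Pi.smul_apply, smul_eq_mul, mul_sub, mul_sum, mul_left_comm c]

lemma rampDownAmount_eq_neg_rampUpAmount (x : I → ℝ) :
    rampDownAmount tmap Q x τ = -rampUpAmount tmap Q x τ :=
  (neg_sub _ _).symm

end Ramp

section BidCone

variable {I : Type*} [Fintype I] (tmap : I → ℕ) (Q r : I → ℝ) (RU RD : ℝ) (T : ℕ)

def bidCone : ConvexCone ℝ (ℝ × (I → ℝ)) where
  carrier := bidFeasSet tmap Q r RU RD T fun _ => True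
  smul_mem' c hc p := by
    rintro ⟨-, hbox, hramp⟩
    refine ⟨trivial, fun i => ?_, fun τ hτ => ?_⟩
    · obtain ⟨h0, hu, hr⟩ := hbox i
      simp only [Prod.smul_fst, Prod.smul_snd, Pi.smul_apply, smul_eq_mul]
      refine ⟨by positivity, by gcongr, ?_⟩
      rw [mul_left_comm]
      gcongr
    · obtain ⟨hup, hdown⟩ := hramp τ hτ
      simp only [Prod.smul_fst, Prod.smul_snd, smul_eq_mul, rampDownAmount_eq_neg_rampUpAmount,
        rampUpAmount_smul] at hdown ⊢
      constructor <;> nlinarith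
  add_mem' p hp q hq := by
    obtain ⟨-, hpbox, hpramp⟩ := hp
    obtain ⟨-, hqbox, hqramp⟩ := hq
    refine ⟨trivial, fun i => ?_, fun τ hτ => ?_⟩
    · obtain ⟨hp0, hpu, hpr⟩ := hpbox i
      obtain ⟨hq0, hqu, hqr⟩ := hqbox i
      simp only [Prod.fst_add, Prod.snd_add, Pi.add_apply, mul_add]
      refine ⟨by linarith, by linarith, by linarith⟩
    · obtain ⟨hpup, hpdown⟩ := hpramp τ hτ
      obtain ⟨hqup, hqdown⟩ := hqramp τ hτ
      simp only [Prod.fst_add, Prod.snd_add, rampDownAmount_eq_neg_rampUpAmount,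
        rampUpAmount_add, mul_add] at hpdown hqdown ⊢
      constructor <;> linarith

lemma bidCone_pointed : (bidCone tmap Q r RU RD T).Pointed :=
  ⟨trivial, fun _ => by simp, fun τ _ => by simp [rampUpAmount, rampDownAmount]⟩

lemma bidFeasSet_eq_sep (ucond : ℝ → Prop) :
    bidFeasSet tmap Q r RU RD T ucond = {p ∈ (bidCone tmap Q r RU RD T : Set _) | ucond p.1} := by
  ext p
  simp only [bidFeasSet, bidCone, ConvexCone.coe_mk, Set.mem_ofPred_eq, true_and]
  tauto

end BidCone

theorem convexHull_bidFeasSet_eq_continuous_relaxation_general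
    {I : Type*} [Fintype I] (T : ℕ)
    (tmap : I → ℕ)
    (Q r : I → ℝ)
    (RU RD : ℝ) :
    convexHull ℝ (bidFeasSet tmap Q r RU RD T (fun u => u = 0 ∨ u = 1)) =
      bidFeasSet tmap Q r RU RD T (fun u => 0 ≤ u ∧ u ≤ 1) := by
  rw [bidFeasSet_eq_sep, bidFeasSet_eq_sep]
  exact (bidCone tmap Q r RU RD T).convexHull_sep_fst_eq_zero_or_one (bidCone_pointed ..)

/-- with start-up decision, minimum acceptance ratios and ramp constraints,
the convex hull of the feasible set is given by its continuous relaxation. -/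
theorem convexHull_bidFeasSet_eq_continuous_relaxation
    {I : Type*} [Fintype I] (T : ℕ) (hT : 1 ≤ T)
    (tmap : I → ℕ) (htmap : ∀ i, 1 ≤ tmap i ∧ tmap i ≤ T)
    (Q r : I → ℝ) (hr : ∀ i, 0 ≤ r i ∧ r i ≤ 1)
    (RU RD : ℝ) (hRU : 0 ≤ RU) (hRD : 0 ≤ RD)
    (hslice : {x : I → ℝ |
      ((1 : ℝ), x) ∈ bidFeasSet tmap Q r RU RD T (fun u => u = 0 ∨ u = 1)}.Nonempty) :
    convexHull ℝ (bidFeasSet tmap Q r RU RD T (fun u => u = 0 ∨ u = 1)) =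
      bidFeasSet tmap Q r RU RD T (fun u => 0 ≤ u ∧ u ≤ 1) :=
  convexHull_bidFeasSet_eq_continuous_relaxation_general T tmap Q r RU RD
end

section
/- (The commitment price of an accepted bid equals its profit or loss.) Under the hypotheses of the profit decomposition lemma (commitment u = 1, primal feasibility of x, dual feasibility at prices π, and complementary slackness), suppose in addition that the commitment price δ satisfies δ = Σ_{i∈I}(s^max_i − r_i s^min_i) + Σ_{t=1}^{T−1}(RU·g^up_t + RD·g^down_t) − F, where F is the participant's fixed (start-up) cost. Then δ = Σ_{i∈I} −Q_i(π_{t(i)} − P_i)x_i − F, i.e. δ equals the participant's profit (a loss if negative) at the commodity prices π. -/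
open Finset

/-- Proposition `proposition-da`: the commitment price `δ` of an accepted
bid equals the participant's profit (or loss, if negative) at the commodity prices `π`. -/
theorem commitment_price_of_accepted_bid_eq_profit
    {I : Type*} [Fintype I] (T : ℕ) (hT : 1 ≤ T)
    (tmap : I → ℕ) (htmap : ∀ i, 1 ≤ tmap i ∧ tmap i ≤ T)
    (Q P r : I → ℝ) (hr : ∀ i, 0 ≤ r i ∧ r i ≤ 1)
    (F : ℝ) (RU RD : ℝ) (hRU : 0 ≤ RU) (hRD : 0 ≤ RD)
    (π : ℕ → ℝ) (x : I → ℝ)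
    (smax smin : I → ℝ) (gup gdn : ℕ → ℝ) (δ : ℝ)
    -- primal feasibility of `(1, x)` (the participant is committed, `u = 1`)
    (hx : ∀ i, 0 ≤ x i ∧ x i ≤ 1 ∧ r i ≤ x i)
    (hramp : ∀ τ ∈ Finset.Icc 1 (T - 1),
      rampUpAmount tmap Q x τ ≤ RU * 1 ∧ rampDownAmount tmap Q x τ ≤ RD * 1)
    -- boundary convention on the ramp dual variables
    (hgup0 : gup 0 = 0) (hgdn0 : gdn 0 = 0) (hgupT : gup T = 0) (hgdnT : gdn T = 0)
    -- dual feasibility at prices `π`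
    (hdual : ∀ i, smax i - smin i
        + Q i * (gdn (tmap i - 1) - gup (tmap i - 1))
        + Q i * (gup (tmap i) - gdn (tmap i))
        + Q i * π (tmap i) = P i * Q i)
    (hsmax : ∀ i, 0 ≤ smax i) (hsmin : ∀ i, 0 ≤ smin i)
    (hgup : ∀ τ, 0 ≤ gup τ) (hgdn : ∀ τ, 0 ≤ gdn τ)
    -- complementary slackness
    (hcs_max : ∀ i, smax i * (1 - x i) = 0)
    (hcs_min : ∀ i, smin i * (x i - r i) = 0)
    (hcs_gup : ∀ τ ∈ Finset.Icc 1 (T - 1), gup τ * (RU - rampUpAmount tmap Q x τ) = 0)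
    (hcs_gdn : ∀ τ ∈ Finset.Icc 1 (T - 1), gdn τ * (RD - rampDownAmount tmap Q x τ) = 0)
    -- the commitment price of the accepted bid
    (hδ : δ = (∑ i, (smax i - r i * smin i)) +
        (∑ τ ∈ Finset.Icc 1 (T - 1), (RU * gup τ + RD * gdn τ)) - F) :
    δ = (∑ i, (-Q i) * (π (tmap i) - P i) * x i) - F := by
  classical
  set y : ℕ → ℝ := fun τ => ∑ i ∈ Finset.univ.filter (fun i => tmap i = τ), (-Q i) * x i
    with hy
  have fib : ∀ f : ℕ → ℝ, ∑ i, ((-Q i) * x i) * f (tmap i)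
      = ∑ t ∈ Finset.Icc 1 T, y t * f t := by
    intro f
    rw [← Finset.sum_fiberwise_of_maps_to (t := Finset.Icc 1 T) (g := tmap)
      (fun i _ => by simp [Finset.mem_Icc]; exact htmap i)
      (fun i => ((-Q i) * x i) * f (tmap i))]
    refine Finset.sum_congr rfl fun t ht => ?_
    rw [hy]
    simp only
    rw [Finset.sum_mul]
    refine Finset.sum_congr rfl fun i hi => ?_
    simp only [Finset.mem_filter] at hi
    rw [hi.2]
  have key : ∀ f : ℕ → ℝ, f 0 = 0 → f T = 0 →
      (∑ i, ((-Q i) * x i) * f (tmap i)) - (∑ i, ((-Q i) * x i) * f (tmap i - 1))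
        = ∑ τ ∈ Finset.Icc 1 (T - 1), f τ * (y τ - y (τ + 1)) := by
    intro f hf0 hfT
    rw [fib f, fib (fun n => f (n - 1))]
    have hA : ∑ t ∈ Finset.Icc 1 T, y t * f t
        = ∑ t ∈ Finset.Icc 1 (T - 1), y t * f t := by
      have hT' : T - 1 + 1 = T := by omega
      rw [← hT', Finset.sum_Icc_succ_top (by omega)]
      rw [hT', hfT]; ring
    have hB : ∑ t ∈ Finset.Icc 1 T, y t * f (t - 1)
        = ∑ τ ∈ Finset.Icc 1 (T - 1), y (τ + 1) * f τ := by
      have h1 : Finset.Icc 1 T = insert 1 (Finset.Icc 2 T) := by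
        ext n; simp [Finset.mem_Icc]; omega
      rw [h1, Finset.sum_insert (by simp)]
      simp only [Nat.sub_self, hf0, mul_zero, zero_add]
      refine Finset.sum_nbij' (fun t => t - 1) (fun τ => τ + 1) ?_ ?_ ?_ ?_ ?_
      · intro a ha; simp [Finset.mem_Icc] at ha ⊢; omega
      · intro a ha; simp [Finset.mem_Icc] at ha ⊢; omega
      · intro a ha; simp only [Finset.mem_Icc] at ha; show a - 1 + 1 = a; omega
      · intro a ha; simp only [Finset.mem_Icc] at ha; show a + 1 - 1 = a; omega
      · intro a ha
        simp only [Finset.mem_Icc] at ha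
        have : a - 1 + 1 = a := by omega
        rw [this]
    rw [hA, hB, ← Finset.sum_sub_distrib]
    exact Finset.sum_congr rfl fun τ _ => by ring
  have hup : ∀ τ ∈ Finset.Icc 1 (T - 1), gup τ * (y (τ + 1) - y τ) = gup τ * RU := by
    intro τ hτ
    have h := hcs_gup τ hτ
    have hru : rampUpAmount tmap Q x τ = y (τ + 1) - y τ := rfl
    rw [hru] at h; nlinarith [h]
  have hdn : ∀ τ ∈ Finset.Icc 1 (T - 1), gdn τ * (y τ - y (τ + 1)) = gdn τ * RD := by
    intro τ hτ
    have h := hcs_gdn τ hτ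
    have hrd : rampDownAmount tmap Q x τ = y τ - y (τ + 1) := rfl
    rw [hrd] at h; nlinarith [h]
  have h1 : ∑ i, (smax i - r i * smin i) = ∑ i, (smax i - smin i) * x i := by
    refine Finset.sum_congr rfl fun i _ => ?_
    have hM := hcs_max i
    have hm := hcs_min i
    nlinarith [hM, hm]
  have h2 : ∑ i, (smax i - smin i) * x i
      = (∑ i, (-Q i) * (π (tmap i) - P i) * x i)
        + ((∑ i, ((-Q i) * x i) * gup (tmap i)) - ∑ i, ((-Q i) * x i) * gup (tmap i - 1))
        - ((∑ i, ((-Q i) * x i) * gdn (tmap i)) - ∑ i, ((-Q i) * x i) * gdn (tmap i - 1)) := by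
    rw [← Finset.sum_sub_distrib, ← Finset.sum_sub_distrib, ← Finset.sum_add_distrib,
      ← Finset.sum_sub_distrib]
    refine Finset.sum_congr rfl fun i _ => ?_
    linear_combination (x i) * (hdual i)
  have hKup := key gup hgup0 hgupT
  have hKdn := key gdn hgdn0 hgdnT
  have hup' : ∑ τ ∈ Finset.Icc 1 (T - 1), gup τ * (y τ - y (τ + 1))
      = -∑ τ ∈ Finset.Icc 1 (T - 1), RU * gup τ := by
    rw [← Finset.sum_neg_distrib]
    refine Finset.sum_congr rfl fun τ hτ => ?_
    have := hup τ hτ; linarith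
  have hdn' : ∑ τ ∈ Finset.Icc 1 (T - 1), gdn τ * (y τ - y (τ + 1))
      = ∑ τ ∈ Finset.Icc 1 (T - 1), RD * gdn τ := by
    refine Finset.sum_congr rfl fun τ hτ => ?_
    have := hdn τ hτ; linarith
  have hsplit : ∑ τ ∈ Finset.Icc 1 (T - 1), (RU * gup τ + RD * gdn τ)
      = (∑ τ ∈ Finset.Icc 1 (T - 1), RU * gup τ)
        + ∑ τ ∈ Finset.Icc 1 (T - 1), RD * gdn τ := Finset.sum_add_distrib
  rw [hδ, h1, h2, hsplit]
  rw [hKup, hKdn, hup', hdn']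
  ring
end

section
/- (The commitment price of a rejected bid bounds its missed profit.) Suppose the dual variables (s^max, s^min, g^up, g^down) satisfy dual feasibility at prices π, and that δ satisfies δ ≥ Σ_{i∈I}(s^max_i − r_i s^min_i) − F + Σ_{t=1}^{T−1}(RU·g^up_t + RD·g^down_t). Then for every x* with (1, x*) ∈ X_c (i.e. r_i ≤ x*_i ≤ 1 for all i and the ramp constraints with u = 1 hold), one has δ ≥ Σ_{i∈I} −Q_i(π_{t(i)} − P_i)x*_i − F; that is, δ is an upper bound on the profit the participant could obtain if committed at prices π. -/
open Finset

/-- Proposition `proposition-dr`: the commitment price `δ` of a rejected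
bid is an upper bound on the profit the participant could obtain if committed at
prices `π`. -/
theorem commitment_price_bounds_missed_profit
    {I : Type*} [Fintype I] (T : ℕ) (hT : 1 ≤ T)
    (tmap : I → ℕ) (htmap : ∀ i, 1 ≤ tmap i ∧ tmap i ≤ T)
    (Q P r : I → ℝ) (hr : ∀ i, 0 ≤ r i ∧ r i ≤ 1)
    (F : ℝ) (RU RD : ℝ) (hRU : 0 ≤ RU) (hRD : 0 ≤ RD)
    (π : ℕ → ℝ)
    (smax smin : I → ℝ) (gup gdn : ℕ → ℝ) (δ : ℝ)
    -- boundary convention on the ramp dual variables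
    (hgup0 : gup 0 = 0) (hgdn0 : gdn 0 = 0) (hgupT : gup T = 0) (hgdnT : gdn T = 0)
    -- dual feasibility at prices `π`
    (hdual : ∀ i, smax i - smin i
        + Q i * (gdn (tmap i - 1) - gup (tmap i - 1))
        + Q i * (gup (tmap i) - gdn (tmap i))
        + Q i * π (tmap i) = P i * Q i)
    (hsmax : ∀ i, 0 ≤ smax i) (hsmin : ∀ i, 0 ≤ smin i)
    (hgup : ∀ τ, 0 ≤ gup τ) (hgdn : ∀ τ, 0 ≤ gdn τ)
    -- the lower bound on δ from constraint (da-cond)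
    (hδ : δ ≥ (∑ i, (smax i - r i * smin i)) - F +
        ∑ τ ∈ Finset.Icc 1 (T - 1), (RU * gup τ + RD * gdn τ)) :
    ∀ xstar : I → ℝ,
      (∀ i, 0 ≤ xstar i ∧ xstar i ≤ 1 ∧ r i ≤ xstar i) →
      (∀ τ ∈ Finset.Icc 1 (T - 1),
        rampUpAmount tmap Q xstar τ ≤ RU * 1 ∧ rampDownAmount tmap Q xstar τ ≤ RD * 1) →
      δ ≥ (∑ i, (-Q i) * (π (tmap i) - P i) * xstar i) - F := by
  intro x hx hramp
  set p : ℕ → ℝ := fun τ => ∑ i ∈ Finset.univ.filter (fun i => tmap i = τ), (-Q i) * x i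
    with hp
  set c : ℕ → ℝ := fun τ => gdn (τ - 1) - gup (τ - 1) + (gup τ - gdn τ) with hc
  have h1 : ∀ i, (-Q i) * (π (tmap i) - P i) * x i
      = (smax i - smin i) * x i + (Q i * x i) * c (tmap i) := by
    intro i
    simp only [hc]
    linear_combination (-(x i)) * (hdual i)
  have hsum1 : (∑ i, (-Q i) * (π (tmap i) - P i) * x i)
      = (∑ i, (smax i - smin i) * x i) + ∑ i, (Q i * x i) * c (tmap i) := by
    rw [← Finset.sum_add_distrib]
    exact Finset.sum_congr rfl fun i _ => h1 i
  -- fiberwise regrouping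
  have hfib : (∑ i, (Q i * x i) * c (tmap i))
      = ∑ τ ∈ Finset.Icc 1 T, (-(p τ)) * c τ := by
    rw [← Finset.sum_fiberwise_of_maps_to (g := tmap) (t := Finset.Icc 1 T)
      (fun i _ => Finset.mem_Icc.mpr (htmap i)) (fun i => Q i * x i * c (tmap i))]
    refine Finset.sum_congr rfl fun τ _ => ?_
    have h2 : ∀ i ∈ Finset.univ.filter (fun i => tmap i = τ),
        Q i * x i * c (tmap i) = -((-Q i) * x i) * c τ := by
      intro i hi
      simp only [Finset.mem_filter] at hi
      rw [hi.2]; ring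
    rw [Finset.sum_congr rfl h2, ← Finset.sum_mul, ← Finset.sum_neg_distrib]
  -- index shift
  have hshift : ∀ f : ℕ → ℝ, f 0 = 0 →
      (∑ τ ∈ Finset.Icc 1 T, p τ * f (τ - 1))
        = ∑ τ ∈ Finset.Icc 1 (T - 1), p (τ + 1) * f τ := by
    intro f hf0
    have : (∑ τ ∈ Finset.Icc 1 T, p τ * f (τ - 1))
        = ∑ τ ∈ Finset.Icc 0 (T - 1), p (τ + 1) * f τ := by
      refine Finset.sum_bij' (fun τ _ => τ - 1) (fun τ _ => τ + 1) ?_ ?_ ?_ ?_ ?_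
      · intro a ha; simp only [Finset.mem_Icc] at ha ⊢; omega
      · intro a ha; simp only [Finset.mem_Icc] at ha ⊢; omega
      · intro a ha; simp only [Finset.mem_Icc] at ha; omega
      · intro a ha; simp only [Finset.mem_Icc] at ha; omega
      · intro a ha
        simp only [Finset.mem_Icc] at ha
        congr 2
        omega
    rw [this]
    have hsplit : Finset.Icc 0 (T - 1) = insert 0 (Finset.Icc 1 (T - 1)) := by
      ext a; simp only [Finset.mem_Icc, Finset.mem_insert]; omega
    rw [hsplit, Finset.sum_insert (by simp), hf0]
    ring
  -- drop top term
  have hdrop : ∀ f : ℕ → ℝ, f T = 0 →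
      (∑ τ ∈ Finset.Icc 1 T, p τ * f τ)
        = ∑ τ ∈ Finset.Icc 1 (T - 1), p τ * f τ := by
    intro f hfT
    have hsplit : Finset.Icc 1 T = insert T (Finset.Icc 1 (T - 1)) := by
      ext a; simp only [Finset.mem_Icc, Finset.mem_insert]; omega
    rw [hsplit, Finset.sum_insert (by simp only [Finset.mem_Icc]; omega), hfT]
    ring
  -- rewrite the fiber sum via shifts
  have habel : (∑ τ ∈ Finset.Icc 1 T, (-(p τ)) * c τ)
      = ∑ τ ∈ Finset.Icc 1 (T - 1),
          (gup τ * (p (τ + 1) - p τ) + gdn τ * (p τ - p (τ + 1))) := by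
    have e1 : (∑ τ ∈ Finset.Icc 1 T, (-(p τ)) * c τ)
        = ((∑ τ ∈ Finset.Icc 1 T, p τ * gup (τ - 1))
            - ∑ τ ∈ Finset.Icc 1 T, p τ * gdn (τ - 1))
          + ((∑ τ ∈ Finset.Icc 1 T, p τ * gdn τ)
            - ∑ τ ∈ Finset.Icc 1 T, p τ * gup τ) := by
      rw [← Finset.sum_sub_distrib, ← Finset.sum_sub_distrib, ← Finset.sum_add_distrib]
      refine Finset.sum_congr rfl fun τ _ => ?_
      simp only [hc]; ring
    rw [e1, hshift _ hgup0, hshift _ hgdn0, hdrop _ hgdnT, hdrop _ hgupT,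
      ← Finset.sum_sub_distrib, ← Finset.sum_sub_distrib, ← Finset.sum_add_distrib]
    refine Finset.sum_congr rfl fun τ _ => ?_
    ring
  -- bound the ramp part
  have hrampbound : (∑ τ ∈ Finset.Icc 1 (T - 1),
        (gup τ * (p (τ + 1) - p τ) + gdn τ * (p τ - p (τ + 1))))
      ≤ ∑ τ ∈ Finset.Icc 1 (T - 1), (RU * gup τ + RD * gdn τ) := by
    refine Finset.sum_le_sum fun τ hτ => ?_
    have h3 := (hramp τ hτ).1
    have h4 := (hramp τ hτ).2
    have hru : p (τ + 1) - p τ ≤ RU := by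
      simpa [rampUpAmount, hp] using h3
    have hrd : p τ - p (τ + 1) ≤ RD := by
      simpa [rampDownAmount, hp] using h4
    nlinarith [hgup τ, hgdn τ, mul_le_mul_of_nonneg_left hru (hgup τ),
      mul_le_mul_of_nonneg_left hrd (hgdn τ)]
  -- bound the s part
  have hsbound : (∑ i, (smax i - smin i) * x i) ≤ ∑ i, (smax i - r i * smin i) := by
    refine Finset.sum_le_sum fun i _ => ?_
    have h5 := hx i
    have h6 := hr i
    nlinarith [hsmax i, hsmin i, h5.1, h5.2.1, h5.2.2]
  have := hsum1
  rw [hfib, habel] at this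
  linarith [hrampbound, hsbound, hδ, this]
end

section
/- (IP Pricing equilibrium property.) Define the participant's profit under the IP settlement rule at prices (π, δ) by profit(u,x) = Σ_{i∈I}(π_{t(i)} − P_i)(−Q_i)x_i − (δ + F)u. Suppose (u*, x*) ∈ X_c, the dual variables (s^max, s^min, g^up, g^down) satisfy dual feasibility at π, and: if u* = 1, complementary slackness holds at x* (s^max_i(1 − x*_i) = 0, s^min_i(x*_i − r_i) = 0 for all i, and g^up_t, g^down_t vanish unless the corresponding ramp constraint is tight at x*) and δ = Σ_i(s^max_i − r_i s^min_i) + Σ_t(RU·g^up_t + RD·g^down_t) − F; if u* = 0, then x* = 0 and δ ≥ Σ_i(s^max_i − r_i s^min_i) − F + Σ_t(RU·g^up_t + RD·g^down_t). Then (u*, x*) maximizes profit over X_c: profit(u,x) ≤ profit(u*,x*) for all (u,x) ∈ X_c. -/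
open Finset

/-- The market participant's feasible set `X_c`. -/
def memXc {I : Type*} [Fintype I] (tmap : I → ℕ) (Q r : I → ℝ) (RU RD : ℝ) (T : ℕ)
    (u : ℝ) (x : I → ℝ) : Prop :=
  (u = 0 ∨ u = 1) ∧
  (∀ i, 0 ≤ x i ∧ x i ≤ u ∧ r i * u ≤ x i) ∧
  ∀ τ ∈ Finset.Icc 1 (T - 1),
    rampUpAmount tmap Q x τ ≤ RU * u ∧ rampDownAmount tmap Q x τ ≤ RD * u

/-- The participant's profit under the IP Pricing settlement rule at prices `(π, δ)`. -/
noncomputable def ipProfit {I : Type*} [Fintype I] (tmap : I → ℕ) (Q P : I → ℝ)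
    (F : ℝ) (π : ℕ → ℝ) (δ : ℝ) (u : ℝ) (x : I → ℝ) : ℝ :=
  (∑ i, (π (tmap i) - P i) * (-Q i) * x i) - (δ + F) * u

/-- Summation by parts on `Icc 1 T`. -/
lemma abel_aux (T : ℕ) (hT : 1 ≤ T) (y g : ℕ → ℝ) :
    ∑ τ ∈ Finset.Icc 1 T, y τ * (g τ - g (τ - 1)) =
      g T * y T - g 0 * y 1 + ∑ τ ∈ Finset.Icc 1 (T - 1), g τ * (y τ - y (τ + 1)) := by
  induction T, hT using Nat.le_induction with
  | base => simp; ring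
  | succ n hn ih =>
    rw [Finset.sum_Icc_succ_top (by omega : 1 ≤ n + 1), ih]
    have h1 : n + 1 - 1 = n := by omega
    rw [h1]
    rw [show n = (n-1)+1 from (by omega), Finset.sum_Icc_succ_top (by omega : 1 ≤ (n-1) + 1),
      show (n-1)+1 = n from (by omega)]
    ring

/-- Grouping a sum over bids by their time period. -/
lemma grouped {I : Type*} [Fintype I] (T : ℕ) (tmap : I → ℕ)
    (htmap : ∀ i, 1 ≤ tmap i ∧ tmap i ≤ T) (c : I → ℝ) (h : ℕ → ℝ) :
    ∑ i, c i * h (tmap i) =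
      ∑ τ ∈ Finset.Icc 1 T, (∑ i ∈ Finset.univ.filter (fun i => tmap i = τ), c i) * h τ := by
  rw [← Finset.sum_fiberwise_of_maps_to (g := tmap) (t := Finset.Icc 1 T)
    (fun i _ => by simp [Finset.mem_Icc]; exact ⟨(htmap i).1, (htmap i).2⟩)]
  refine Finset.sum_congr rfl fun τ _ => ?_
  rw [Finset.sum_mul]
  refine Finset.sum_congr rfl fun i hi => ?_
  simp only [Finset.mem_filter] at hi
  rw [hi.2]

/-- Summation-by-parts step for one family of ramp dual variables. -/
lemma ramp_sum {I : Type*} [Fintype I] (T : ℕ) (hT : 1 ≤ T) (tmap : I → ℕ)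
    (htmap : ∀ i, 1 ≤ tmap i ∧ tmap i ≤ T) (Q : I → ℝ) (x : I → ℝ) (g : ℕ → ℝ)
    (hg0 : g 0 = 0) (hgT : g T = 0) :
    ∑ i, (Q i * x i) * (g (tmap i) - g (tmap i - 1)) =
      ∑ τ ∈ Finset.Icc 1 (T - 1), g τ * rampUpAmount tmap Q x τ := by
  rw [grouped T tmap htmap (fun i => Q i * x i) (fun τ => g τ - g (τ - 1))]
  have key : ∀ τ, (∑ i ∈ Finset.univ.filter (fun i => tmap i = τ), Q i * x i) =
      -(∑ i ∈ Finset.univ.filter (fun i => tmap i = τ), (-Q i) * x i) := by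
    intro τ; rw [← Finset.sum_neg_distrib]; exact Finset.sum_congr rfl fun i _ => by ring
  calc ∑ τ ∈ Finset.Icc 1 T,
        (∑ i ∈ Finset.univ.filter (fun i => tmap i = τ), Q i * x i) * (g τ - g (τ - 1))
      = ∑ τ ∈ Finset.Icc 1 T,
        (fun τ => -(∑ i ∈ Finset.univ.filter (fun i => tmap i = τ), (-Q i) * x i)) τ
          * (g τ - g (τ - 1)) := by
        exact Finset.sum_congr rfl fun τ _ => by rw [key τ]
    _ = g T * _ - g 0 * _ + ∑ τ ∈ Finset.Icc 1 (T - 1),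
          g τ * ((fun τ => -(∑ i ∈ Finset.univ.filter (fun i => tmap i = τ), (-Q i) * x i)) τ
            - (fun τ => -(∑ i ∈ Finset.univ.filter (fun i => tmap i = τ), (-Q i) * x i)) (τ+1)) :=
        abel_aux T hT _ g
    _ = ∑ τ ∈ Finset.Icc 1 (T - 1), g τ * rampUpAmount tmap Q x τ := by
        rw [hg0, hgT]
        simp only [zero_mul, sub_zero, zero_add]
        exact Finset.sum_congr rfl fun τ _ => by rw [rampUpAmount]; ring

/-- Rewriting the revenue part of the profit using the dual variables. -/
lemma profit_sum_eq {I : Type*} [Fintype I] (T : ℕ) (hT : 1 ≤ T) (tmap : I → ℕ)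
    (htmap : ∀ i, 1 ≤ tmap i ∧ tmap i ≤ T) (Q P : I → ℝ) (π : ℕ → ℝ)
    (smax smin : I → ℝ) (gup gdn : ℕ → ℝ)
    (hgup0 : gup 0 = 0) (hgdn0 : gdn 0 = 0) (hgupT : gup T = 0) (hgdnT : gdn T = 0)
    (hdual : ∀ i, smax i - smin i
        + Q i * (gdn (tmap i - 1) - gup (tmap i - 1))
        + Q i * (gup (tmap i) - gdn (tmap i))
        + Q i * π (tmap i) = P i * Q i)
    (x : I → ℝ) :
    ∑ i, (π (tmap i) - P i) * (-Q i) * x i =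
      ∑ i, (smax i - smin i) * x i +
        ∑ τ ∈ Finset.Icc 1 (T - 1),
          (gup τ * rampUpAmount tmap Q x τ + gdn τ * rampDownAmount tmap Q x τ) := by
  have step1 : ∑ i, (π (tmap i) - P i) * (-Q i) * x i =
      ∑ i, ((smax i - smin i) * x i
        + (Q i * x i) * (gup (tmap i) - gup (tmap i - 1))
        - (Q i * x i) * (gdn (tmap i) - gdn (tmap i - 1))) :=
    Finset.sum_congr rfl fun i _ => by linear_combination (-(x i)) * hdual i
  rw [step1]
  rw [Finset.sum_sub_distrib, Finset.sum_add_distrib,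
    ramp_sum T hT tmap htmap Q x gup hgup0 hgupT,
    ramp_sum T hT tmap htmap Q x gdn hgdn0 hgdnT]
  have e : ∑ τ ∈ Finset.Icc 1 (T - 1),
      (gup τ * rampUpAmount tmap Q x τ - gdn τ * rampUpAmount tmap Q x τ) =
      ∑ τ ∈ Finset.Icc 1 (T - 1),
      (gup τ * rampUpAmount tmap Q x τ + gdn τ * rampDownAmount tmap Q x τ) :=
    Finset.sum_congr rfl fun τ _ => by rw [rampUpAmount, rampDownAmount]; ring
  rw [← e, Finset.sum_sub_distrib]
  ring

/-- IP Pricing equilibrium property, Theorem `thm-ip-equilibrium`: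
`(u*, x*)` maximizes the participant's profit under the IP settlement rule over `X_c`. -/
theorem ip_pricing_equilibrium
    {I : Type*} [Fintype I] (T : ℕ) (hT : 1 ≤ T)
    (tmap : I → ℕ) (htmap : ∀ i, 1 ≤ tmap i ∧ tmap i ≤ T)
    (Q P r : I → ℝ) (hr : ∀ i, 0 ≤ r i ∧ r i ≤ 1)
    (F : ℝ) (RU RD : ℝ) (hRU : 0 ≤ RU) (hRD : 0 ≤ RD)
    (π : ℕ → ℝ) (δ : ℝ)
    (ustar : ℝ) (xstar : I → ℝ)
    (hmem : memXc tmap Q r RU RD T ustar xstar)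
    (smax smin : I → ℝ) (gup gdn : ℕ → ℝ)
    -- boundary convention on the ramp dual variables
    (hgup0 : gup 0 = 0) (hgdn0 : gdn 0 = 0) (hgupT : gup T = 0) (hgdnT : gdn T = 0)
    -- dual feasibility at prices `π`
    (hdual : ∀ i, smax i - smin i
        + Q i * (gdn (tmap i - 1) - gup (tmap i - 1))
        + Q i * (gup (tmap i) - gdn (tmap i))
        + Q i * π (tmap i) = P i * Q i)
    (hsmax : ∀ i, 0 ≤ smax i) (hsmin : ∀ i, 0 ≤ smin i)
    (hgup : ∀ τ, 0 ≤ gup τ) (hgdn : ∀ τ, 0 ≤ gdn τ)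
    -- case `u* = 1`: complementary slackness at `x*` and δ is the profit-giving dual value
    (hcase1 : ustar = 1 →
      (∀ i, smax i * (1 - xstar i) = 0) ∧
      (∀ i, smin i * (xstar i - r i) = 0) ∧
      (∀ τ ∈ Finset.Icc 1 (T - 1),
        gup τ * (RU - rampUpAmount tmap Q xstar τ) = 0 ∧
        gdn τ * (RD - rampDownAmount tmap Q xstar τ) = 0) ∧
      δ = (∑ i, (smax i - r i * smin i)) +
        (∑ τ ∈ Finset.Icc 1 (T - 1), (RU * gup τ + RD * gdn τ)) - F)
    -- case `u* = 0`: `x* = 0` and δ dominates the dual value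
    (hcase0 : ustar = 0 →
      xstar = 0 ∧
      δ ≥ (∑ i, (smax i - r i * smin i)) - F +
        ∑ τ ∈ Finset.Icc 1 (T - 1), (RU * gup τ + RD * gdn τ)) :
    ∀ (u : ℝ) (x : I → ℝ), memXc tmap Q r RU RD T u x →
      ipProfit tmap Q P F π δ u x ≤ ipProfit tmap Q P F π δ ustar xstar := by
  intro u x hx
  -- rewrite profits via the dual identity
  have hform : ∀ (v : ℝ) (z : I → ℝ), ipProfit tmap Q P F π δ v z =
      ∑ i, (smax i - smin i) * z i +
        ∑ τ ∈ Finset.Icc 1 (T - 1),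
          (gup τ * rampUpAmount tmap Q z τ + gdn τ * rampDownAmount tmap Q z τ)
        - (δ + F) * v := by
    intro v z
    rw [ipProfit, profit_sum_eq T hT tmap htmap Q P π smax smin gup gdn
      hgup0 hgdn0 hgupT hgdnT hdual]
  -- upper bound for any feasible point
  have hbound : ipProfit tmap Q P F π δ u x ≤
      u * ((∑ i, (smax i - r i * smin i)) +
        (∑ τ ∈ Finset.Icc 1 (T - 1), (RU * gup τ + RD * gdn τ)) - (δ + F)) := by
    rw [hform u x]
    have h1 : ∑ i, (smax i - smin i) * x i ≤ ∑ i, u * (smax i - r i * smin i) := by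
      refine Finset.sum_le_sum fun i _ => ?_
      obtain ⟨hx0, hxu, hxr⟩ := hx.2.1 i
      nlinarith [hsmax i, hsmin i]
    have h2 : ∑ τ ∈ Finset.Icc 1 (T - 1),
        (gup τ * rampUpAmount tmap Q x τ + gdn τ * rampDownAmount tmap Q x τ) ≤
        ∑ τ ∈ Finset.Icc 1 (T - 1), u * (RU * gup τ + RD * gdn τ) := by
      refine Finset.sum_le_sum fun τ hτ => ?_
      obtain ⟨hru, hrd⟩ := hx.2.2 τ hτ
      nlinarith [hgup τ, hgdn τ]
    rw [← Finset.mul_sum] at h1 h2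
    have := add_le_add h1 h2
    linarith
  rcases hmem.1 with h0 | h1
  · -- u* = 0
    obtain ⟨hx0, hδ⟩ := hcase0 h0
    have hstar : ipProfit tmap Q P F π δ ustar xstar = 0 := by
      rw [h0, hx0]; simp [ipProfit]
    rw [hstar]
    have hu0 : 0 ≤ u := by rcases hx.1 with h | h <;> simp [h]
    have hbr : (∑ i, (smax i - r i * smin i)) +
        (∑ τ ∈ Finset.Icc 1 (T - 1), (RU * gup τ + RD * gdn τ)) - (δ + F) ≤ 0 := by
      linarith
    calc ipProfit tmap Q P F π δ u x ≤ _ := hbound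
      _ ≤ 0 := mul_nonpos_of_nonneg_of_nonpos hu0 hbr
  · -- u* = 1
    obtain ⟨hcs1, hcs2, hcs3, hδ⟩ := hcase1 h1
    have hstar : ipProfit tmap Q P F π δ ustar xstar = 0 := by
      rw [hform ustar xstar, h1]
      have e1 : ∑ i, (smax i - smin i) * xstar i = ∑ i, (smax i - r i * smin i) :=
        Finset.sum_congr rfl fun i _ => by linear_combination (-1 : ℝ) * hcs1 i - hcs2 i
      have e2 : ∑ τ ∈ Finset.Icc 1 (T - 1),
          (gup τ * rampUpAmount tmap Q xstar τ + gdn τ * rampDownAmount tmap Q xstar τ) =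
          ∑ τ ∈ Finset.Icc 1 (T - 1), (RU * gup τ + RD * gdn τ) := by
        refine Finset.sum_congr rfl fun τ hτ => ?_
        obtain ⟨c1, c2⟩ := hcs3 τ hτ
        linear_combination (-1 : ℝ) * c1 - c2
      rw [e1, e2]
      linarith
    rw [hstar]
    have hbr : (∑ i, (smax i - r i * smin i)) +
        (∑ τ ∈ Finset.Icc 1 (T - 1), (RU * gup τ + RD * gdn τ)) - (δ + F) = 0 := by
      linarith
    rw [hbr, mul_zero] at hbound
    exact hbound
end

section
/- For the market instance of Example 1.1, no market equilibrium supported by a uniform price exists: there is no π ∈ ℝ, no x_a, x_b, x_d ∈ [0,1] and no (u_c, x_c) with u_c ∈ {0,1} and (11/12)u_c ≤ x_c ≤ u_c, such that the balance constraint 10x_a + 14x_b = 12x_c + 13x_d holds and simultaneously x_a maximizes 10(300 − π)y over y ∈ [0,1], x_b maximizes 14(10 − π)y over y ∈ [0,1], x_d maximizes 13(π − 100)y over y ∈ [0,1], and (u_c, x_c) maximizes 12(π − 40)y over {(v,y) : v ∈ {0,1}, (11/12)v ≤ y ≤ v}. -/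
/-- In Example 1.1 (buy A: 10 MW @300, buy B: 14 MW @10,
sell C: 12 MW @40 with minimum acceptance ratio 11/12, sell D: 13 MW @100),
no market equilibrium supported by a uniform price exists. -/
theorem example11_no_uniform_price_equilibrium :
    ¬ ∃ (π xa xb xd uc xc : ℝ),
      xa ∈ Set.Icc (0:ℝ) 1 ∧ xb ∈ Set.Icc (0:ℝ) 1 ∧ xd ∈ Set.Icc (0:ℝ) 1 ∧
      (uc = 0 ∨ uc = 1) ∧ (11/12) * uc ≤ xc ∧ xc ≤ uc ∧
      10 * xa + 14 * xb = 12 * xc + 13 * xd ∧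
      (∀ y ∈ Set.Icc (0:ℝ) 1, 10 * (300 - π) * y ≤ 10 * (300 - π) * xa) ∧
      (∀ y ∈ Set.Icc (0:ℝ) 1, 14 * (10 - π) * y ≤ 14 * (10 - π) * xb) ∧
      (∀ y ∈ Set.Icc (0:ℝ) 1, 13 * (π - 100) * y ≤ 13 * (π - 100) * xd) ∧
      (∀ v y : ℝ, (v = 0 ∨ v = 1) → (11/12) * v ≤ y → y ≤ v →
        12 * (π - 40) * y ≤ 12 * (π - 40) * xc) := by
  rintro ⟨π, xa, xb, xd, uc, xc, ⟨ha0, ha1⟩, ⟨hb0, hb1⟩, ⟨hd0, hd1⟩, huc, hcl, hcu,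
    hbal, hA, hB, hD, hC⟩
  have hA1 := hA 1 ⟨by norm_num, le_refl 1⟩
  have hB0 := hB 0 ⟨le_refl 0, by norm_num⟩
  have hD0 := hD 0 ⟨le_refl 0, by norm_num⟩
  have hC0 := hC 0 0 (Or.inl rfl) (by norm_num) le_rfl
  have hC1 := hC 1 1 (Or.inr rfl) (by norm_num) le_rfl
  have hc0 : (0:ℝ) ≤ xc := by rcases huc with h | h <;> rw [h] at hcl <;> linarith
  rcases lt_trichotomy π 40 with h40 | h40 | h40
  · -- π < 40 : xa = 1, xc = 0, xd = 0, xb ≥ 0 contradicts balance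
    have hxa : xa = 1 := by nlinarith [hA1, ha1]
    have hxc : xc = 0 := by nlinarith [hC0, hc0]
    have hxd : xd = 0 := by nlinarith [hD0, hd0]
    rw [hxa, hxc, hxd] at hbal; linarith
  · -- π = 40 : xa = 1, xb = 0, xd = 0, balance forces xc = 5/6, impossible
    have hxa : xa = 1 := by nlinarith [hA1, ha1]
    have hxb : xb = 0 := by nlinarith [hB0, hb0]
    have hxd : xd = 0 := by nlinarith [hD0, hd0]
    rw [hxa, hxb, hxd] at hbal
    rcases huc with h | h <;> rw [h] at hcl hcu <;> linarith
  · -- π > 40 : xb = 0, xc ≥ 1, so RHS ≥ 12 > 10 ≥ LHS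
    have hxb : xb = 0 := by nlinarith [hB0, hb0]
    have hxc : (1:ℝ) ≤ xc := by nlinarith [hC1]
    rw [hxb] at hbal; linarith
end

section
/- For the market instance of Example 1.2, no market equilibrium supported by a uniform price exists: there is no π ∈ ℝ, no x_a, x_b, x_d ∈ [0,1] and no (u_c, x_c) with u_c ∈ {0,1} and 0 ≤ x_c ≤ u_c, such that the balance constraint 10x_a + 14x_b = 12x_c + 13x_d holds and simultaneously x_a maximizes 10(300 − π)y over y ∈ [0,1], x_b maximizes 14(10 − π)y over y ∈ [0,1], x_d maximizes 13(π − 100)y over y ∈ [0,1], and (u_c, x_c) maximizes 12(π − 40)y − 200v over {(v,y) : v ∈ {0,1}, 0 ≤ y ≤ v}. -/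
/-- In Example 1.2 (buy A: 10 MW @300, buy B: 14 MW @10,
sell C: 12 MW @40 with start-up cost 200, sell D: 13 MW @100),
no market equilibrium supported by a uniform price exists. -/
theorem example12_no_uniform_price_equilibrium :
    ¬ ∃ (π xa xb xd uc xc : ℝ),
      xa ∈ Set.Icc (0:ℝ) 1 ∧ xb ∈ Set.Icc (0:ℝ) 1 ∧ xd ∈ Set.Icc (0:ℝ) 1 ∧
      (uc = 0 ∨ uc = 1) ∧ 0 ≤ xc ∧ xc ≤ uc ∧
      10 * xa + 14 * xb = 12 * xc + 13 * xd ∧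
      (∀ y ∈ Set.Icc (0:ℝ) 1, 10 * (300 - π) * y ≤ 10 * (300 - π) * xa) ∧
      (∀ y ∈ Set.Icc (0:ℝ) 1, 14 * (10 - π) * y ≤ 14 * (10 - π) * xb) ∧
      (∀ y ∈ Set.Icc (0:ℝ) 1, 13 * (π - 100) * y ≤ 13 * (π - 100) * xd) ∧
      (∀ v y : ℝ, (v = 0 ∨ v = 1) → 0 ≤ y → y ≤ v →
        12 * (π - 40) * y - 200 * v ≤ 12 * (π - 40) * xc - 200 * uc) := by
  rintro ⟨π, xa, xb, xd, uc, xc, ⟨ha0, ha1⟩, ⟨hb0, hb1⟩, ⟨hd0, hd1⟩, huc, hxc0, hxcu,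
    hbal, hA, hB, hD, hC⟩
  by_cases hπ100 : π < 100
  · have hxd : xd = 0 := by
      have := hD 0 ⟨le_rfl, by norm_num⟩
      nlinarith
    have hxa : xa = 1 := by
      have := hA 1 ⟨by norm_num, le_rfl⟩
      nlinarith
    rcases huc with h0 | h1
    · have hxc : xc = 0 := le_antisymm (h0 ▸ hxcu) hxc0
      nlinarith
    · subst h1
      have hsur : (0:ℝ) ≤ 12 * (π - 40) * xc - 200 := by
        have := hC 0 0 (Or.inl rfl) le_rfl le_rfl
        nlinarith
      have hπ10 : (10:ℝ) < π := by nlinarith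
      have hxb : xb = 0 := by
        have := hB 0 ⟨le_rfl, by norm_num⟩
        nlinarith
      have hxc : xc = 5 / 6 := by nlinarith
      have := hC 1 1 (Or.inr rfl) (by norm_num) le_rfl
      nlinarith
  · push_neg at hπ100
    have hxb : xb = 0 := by
      have := hB 0 ⟨le_rfl, by norm_num⟩
      nlinarith
    have hC1 := hC 1 1 (Or.inr rfl) (by norm_num) le_rfl
    rcases huc with h0 | h1
    · have hxc : xc = 0 := le_antisymm (h0 ▸ hxcu) hxc0
      nlinarith
    · subst h1
      have hxc : xc = 1 := by nlinarith
      nlinarith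
end

section
/- For Example 1.1 with reference welfare-optimal solution (x_a, x_b, x_c, x_d, u_c) = (1, 1/14, 11/12, 0, 1), define for each price π ∈ ℝ the total uplift U(π) = [max_{y∈[0,1]} 10(300−π)y − 10(300−π)] + [max_{y∈[0,1]} 14(10−π)y − (1/14)·14(10−π)] + [max_{(v,y): v∈{0,1}, (11/12)v ≤ y ≤ v} 12(π−40)y − (11/12)·12(π−40)] + [max_{y∈[0,1]} 13(π−100)y − 0]. Then the minimum of U over ℝ equals 30 and is attained at π = 40. -/
lemma sup_lin (k : ℝ) : sSup ((fun y => k * y) '' Set.Icc (0:ℝ) 1) = max k 0 := by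
  apply IsGreatest.csSup_eq
  constructor
  · rcases le_total 0 k with h | h
    · exact ⟨1, by constructor <;> norm_num, by simp [max_eq_left h]⟩
    · exact ⟨0, by constructor <;> norm_num, by simp [max_eq_right h]⟩
  · rintro z ⟨y, ⟨hy0, hy1⟩, rfl⟩
    rcases le_total 0 k with h | h
    · calc k * y ≤ k * 1 := by nlinarith
        _ ≤ max k 0 := by simp
    · calc k * y ≤ 0 := by nlinarith
        _ ≤ max k 0 := le_max_right _ _

lemma sup_pair (k : ℝ) :
    sSup ((fun p : ℝ × ℝ => k * p.2) ''
      {p : ℝ × ℝ | (p.1 = 0 ∨ p.1 = 1) ∧ (11/12) * p.1 ≤ p.2 ∧ p.2 ≤ p.1}) = max k 0 := by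
  apply IsGreatest.csSup_eq
  constructor
  · rcases le_total 0 k with h | h
    · exact ⟨(1, 1), ⟨Or.inr rfl, by norm_num⟩, by simp [max_eq_left h]⟩
    · exact ⟨(0, 0), ⟨Or.inl rfl, by norm_num⟩, by simp [max_eq_right h]⟩
  · rintro z ⟨⟨v, y⟩, ⟨hv, hlo, hhi⟩, rfl⟩
    simp only at *
    have hv0 : (0:ℝ) ≤ v := by rcases hv with rfl | rfl <;> norm_num
    have hv1 : v ≤ 1 := by rcases hv with rfl | rfl <;> norm_num
    have hy0 : (0:ℝ) ≤ y := le_trans (by nlinarith) hlo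
    have hy1 : y ≤ 1 := le_trans hhi hv1
    rcases le_total 0 k with h | h
    · calc k * y ≤ k * 1 := by nlinarith
        _ ≤ max k 0 := by simp
    · calc k * y ≤ 0 := by nlinarith
        _ ≤ max k 0 := le_max_right _ _

/-- for Example 1.1 with reference welfare-optimal solution
`(x_a, x_b, x_c, x_d, u_c) = (1, 1/14, 11/12, 0, 1)`, the total uplift `U` is
minimized over all prices at `π = 40`, with minimum value 30. -/
theorem example11_minimal_total_uplift
    (U : ℝ → ℝ)
    (hU : ∀ π : ℝ, U π =
      (sSup ((fun y => 10 * (300 - π) * y) '' Set.Icc (0:ℝ) 1) - 10 * (300 - π) * 1)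
      + (sSup ((fun y => 14 * (10 - π) * y) '' Set.Icc (0:ℝ) 1)
          - (1/14) * (14 * (10 - π)))
      + (sSup ((fun p : ℝ × ℝ => 12 * (π - 40) * p.2) ''
            {p : ℝ × ℝ | (p.1 = 0 ∨ p.1 = 1) ∧ (11/12) * p.1 ≤ p.2 ∧ p.2 ≤ p.1})
          - (11/12) * (12 * (π - 40)))
      + (sSup ((fun y => 13 * (π - 100) * y) '' Set.Icc (0:ℝ) 1) - 0)) :
    U 40 = 30 ∧ ∀ π : ℝ, 30 ≤ U π := by
  have key : ∀ π : ℝ, U π =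
      (max (10 * (300 - π)) 0 - 10 * (300 - π) * 1)
      + (max (14 * (10 - π)) 0 - (1/14) * (14 * (10 - π)))
      + (max (12 * (π - 40)) 0 - (11/12) * (12 * (π - 40)))
      + (max (13 * (π - 100)) 0 - 0) := by
    intro π
    rw [hU π, sup_lin, sup_lin, sup_lin, sup_pair]
  constructor
  · rw [key 40]; norm_num
  · intro π
    rw [key π]
    rcases le_total (10 * (300 - π)) 0 with h1 | h1 <;>
      (first | rw [max_eq_right h1] | rw [max_eq_left h1]) <;>
    rcases le_total (14 * (10 - π)) 0 with h2 | h2 <;>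
      (first | rw [max_eq_right h2] | rw [max_eq_left h2]) <;>
    rcases le_total (12 * (π - 40)) 0 with h3 | h3 <;>
      (first | rw [max_eq_right h3] | rw [max_eq_left h3]) <;>
    rcases le_total (13 * (π - 100)) 0 with h4 | h4 <;>
      (first | rw [max_eq_right h4] | rw [max_eq_left h4]) <;>
    linarith
end

section
/- For Example 2 with reference welfare-optimal solution (x_a, x_b, x_c, x_d, x_e) = (1, 1, 0, 1, 1), define for each price π ∈ ℝ the total uplift U(π) = [max_{y∈[0,1]} 50(π−30)y − 50(π−30)] + [max_{y∈[0,1]} 50(130−π)y − 50(130−π)] + [max_{y∈[0,1]} 40(π−40)y − 0] + [max_{v∈{0,1}} 200(π−60)v − 200(π−60)] + [max_{v∈{0,1}} 200(90−π)v − 200(90−π)]. Then the minimum of U over ℝ equals 800 and is attained at π = 60. -/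
lemma sSup_mul_Icc (c : ℝ) :
    sSup ((fun y => c * y) '' Set.Icc (0:ℝ) 1) = max c 0 := by
  apply IsGreatest.csSup_eq
  constructor
  · rcases le_total c 0 with h | h
    · exact ⟨0, ⟨le_refl _, zero_le_one⟩, by simp [max_eq_right h]⟩
    · exact ⟨1, ⟨zero_le_one, le_refl _⟩, by simp [max_eq_left h]⟩
  · rintro x ⟨y, ⟨hy0, hy1⟩, rfl⟩
    simp only
    rcases le_total c 0 with h | h
    · exact le_max_of_le_right (mul_nonpos_of_nonpos_of_nonneg h hy0)
    · apply le_max_of_le_left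
      have := mul_nonneg h (sub_nonneg.mpr hy1)
      nlinarith

lemma sSup_mul_pair (c : ℝ) :
    sSup ((fun v => c * v) '' ({0, 1} : Set ℝ)) = max c 0 := by
  apply IsGreatest.csSup_eq
  constructor
  · rcases le_total c 0 with h | h
    · exact ⟨0, Or.inl rfl, by simp [max_eq_right h]⟩
    · exact ⟨1, Or.inr rfl, by simp [max_eq_left h]⟩
  · rintro x ⟨v, hv, rfl⟩
    rcases hv with rfl | rfl
    · simp
    · simp

/-- for Example 2 with reference welfare-optimal solution
`(x_a, x_b, x_c, x_d, x_e) = (1, 1, 0, 1, 1)`, the total uplift `U` is minimized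
over all prices at `π = 60`, with minimum value 800. -/
theorem example2_minimal_total_uplift
    (U : ℝ → ℝ)
    (hU : ∀ π : ℝ, U π =
      (sSup ((fun y => 50 * (π - 30) * y) '' Set.Icc (0:ℝ) 1) - 50 * (π - 30) * 1)
      + (sSup ((fun y => 50 * (130 - π) * y) '' Set.Icc (0:ℝ) 1) - 50 * (130 - π) * 1)
      + (sSup ((fun y => 40 * (π - 40) * y) '' Set.Icc (0:ℝ) 1) - 0)
      + (sSup ((fun v => 200 * (π - 60) * v) '' ({0, 1} : Set ℝ)) - 200 * (π - 60) * 1)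
      + (sSup ((fun v => 200 * (90 - π) * v) '' ({0, 1} : Set ℝ)) - 200 * (90 - π) * 1)) :
    U 60 = 800 ∧ ∀ π : ℝ, 800 ≤ U π := by
  have hU' : ∀ π : ℝ, U π =
      (max (50 * (π - 30)) 0 - 50 * (π - 30))
      + (max (50 * (130 - π)) 0 - 50 * (130 - π))
      + max (40 * (π - 40)) 0
      + (max (200 * (π - 60)) 0 - 200 * (π - 60))
      + (max (200 * (90 - π)) 0 - 200 * (90 - π)) := by
    intro π
    rw [hU π, sSup_mul_Icc, sSup_mul_Icc, sSup_mul_Icc, sSup_mul_pair, sSup_mul_pair]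
    ring
  constructor
  · rw [hU' 60]
    norm_num
  · intro π
    rw [hU' π]
    have h1 : (50:ℝ) * (π - 30) ≤ max (50 * (π - 30)) 0 := le_max_left _ _
    have h2 : (50:ℝ) * (130 - π) ≤ max (50 * (130 - π)) 0 := le_max_left _ _
    have h3a : (40:ℝ) * (π - 40) ≤ max (40 * (π - 40)) 0 := le_max_left _ _
    have h3b : (0:ℝ) ≤ max (40 * (π - 40)) 0 := le_max_right _ _
    have h4a : (200:ℝ) * (π - 60) ≤ max (200 * (π - 60)) 0 := le_max_left _ _
    have h4b : (0:ℝ) ≤ max (200 * (π - 60)) 0 := le_max_right _ _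
    have h5 : (200:ℝ) * (90 - π) ≤ max (200 * (90 - π)) 0 := le_max_left _ _
    rcases le_total π 40 with h | h
    · linarith
    · rcases le_total π 60 with h' | h' <;> linarith
end

section
/- For Example 1.1, any balanced outcome in which C is committed and all convex bids are at equilibrium gives C a strictly negative surplus: if π ∈ ℝ, x_a, x_b, x_d ∈ [0,1], u_c = 1 and 11/12 ≤ x_c ≤ 1 satisfy the balance constraint 10x_a + 14x_b = 12x_c + 13x_d, and x_a maximizes 10(300−π)y, x_b maximizes 14(10−π)y, and x_d maximizes 13(π−100)y, each over y ∈ [0,1], then necessarily π = 10 and C's surplus 12(π−40)x_c satisfies 12(π−40)x_c ≤ −330 < 0. Consequently, under European-like market rules (which forbid losses for accepted non-convex bids) C must be rejected. -/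
/-- in Example 1.1, any balanced outcome committing C in which all convex
bids are at equilibrium forces `π = 10` and gives C the strictly negative surplus
`12(π − 40)x_c ≤ −330 < 0`; hence under European-like rules C must be rejected. -/
theorem example11_committed_C_incurs_loss
    (π xa xb xd xc : ℝ)
    (hxa : xa ∈ Set.Icc (0:ℝ) 1) (hxb : xb ∈ Set.Icc (0:ℝ) 1)
    (hxd : xd ∈ Set.Icc (0:ℝ) 1)
    (hxc : 11/12 ≤ xc ∧ xc ≤ 1)
    (hbal : 10 * xa + 14 * xb = 12 * xc + 13 * xd)
    (ha : ∀ y ∈ Set.Icc (0:ℝ) 1, 10 * (300 - π) * y ≤ 10 * (300 - π) * xa)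
    (hb : ∀ y ∈ Set.Icc (0:ℝ) 1, 14 * (10 - π) * y ≤ 14 * (10 - π) * xb)
    (hd : ∀ y ∈ Set.Icc (0:ℝ) 1, 13 * (π - 100) * y ≤ 13 * (π - 100) * xd) :
    π = 10 ∧ 12 * (π - 40) * xc ≤ -330 ∧ (-330 : ℝ) < 0 := by
  obtain ⟨hxa0, hxa1⟩ := hxa
  obtain ⟨hxb0, hxb1⟩ := hxb
  obtain ⟨hxd0, hxd1⟩ := hxd
  obtain ⟨hxc0, hxc1⟩ := hxc
  have ha1 := ha 1 ⟨zero_le_one, le_refl 1⟩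
  have hb1 := hb 1 ⟨zero_le_one, le_refl 1⟩
  have hb0 := hb 0 ⟨le_refl 0, zero_le_one⟩
  have hd0 := hd 0 ⟨le_refl 0, zero_le_one⟩
  have hpi : π = 10 := by
    rcases lt_trichotomy π 10 with h | h | h
    · have hxa' : xa = 1 := by nlinarith
      have hxb' : xb = 1 := by nlinarith
      have hxd' : xd = 0 := by nlinarith
      nlinarith
    · exact h
    · have hxb' : xb = 0 := by nlinarith
      nlinarith
  refine ⟨hpi, ?_, by norm_num⟩
  subst hpi
  nlinarith
end
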